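/- arXiv:0706.0819 — 4 statements merged into one kernel-verified Lean document; each statement's English description precedes it below -/
import Mathlib

section
/- For every real number r with 0 ≤ r ≤ 1 and every complex number z with |z| ≤ 1/2, one has | |z+1|^r - 1 | ≤ r (1 + 2^(1-r)) |z|. -/
/-! Put `t = ‖z + 1‖`, so that `|t - 1| ≤ ‖z‖ ≤ 1/2`. By concavity of `x ↦ x ^ r`,
`|t ^ r - 1|` is at most `|t - 1|` times the slope `r * (min t 1) ^ (r - 1)` of the tangent at
`min t 1`, and this slope is at most `r * 2 ^ (1 - r)` because `t ≥ 1/2`. -/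

namespace Real

variable {t r : ℝ}

lemma one_sub_rpow_le_mul_rpow_sub_one (ht : 0 < t) (hr0 : 0 ≤ r) (hr1 : r ≤ 1) :
    1 - t ^ r ≤ r * (1 - t) * t ^ (r - 1) := by
  have hBernoulli : (t ^ r)⁻¹ ≤ 1 + r * (t⁻¹ - 1) := by
    have h := rpow_one_add_le_one_add_mul_self (by linarith [inv_pos.2 ht] : -1 ≤ t⁻¹ - 1) hr0 hr1
    rwa [add_sub_cancel, inv_rpow ht.le] at h
  have htr : 0 < t ^ r := rpow_pos_of_pos ht r
  have hslope : (t⁻¹ - 1) * t ^ r = (1 - t) * t ^ (r - 1) := by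
    rw [rpow_sub_one ht.ne']
    field_simp
  have h := mul_le_mul_of_nonneg_right hBernoulli htr.le
  rw [inv_mul_cancel₀ htr.ne', add_mul, one_mul, mul_assoc, hslope] at h
  linarith

lemma rpow_sub_one_le_two_rpow_one_sub (ht : 1 / 2 ≤ t) (hr1 : r ≤ 1) :
    t ^ (r - 1) ≤ 2 ^ (1 - r) :=
  calc t ^ (r - 1) ≤ (1 / 2) ^ (r - 1) := rpow_le_rpow_of_nonpos (by norm_num) ht (by linarith)
    _ = 2 ^ (1 - r) := by rw [one_div, inv_rpow zero_le_two, ← rpow_neg zero_le_two, neg_sub]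

lemma abs_rpow_sub_one_le_of_one_half_le (ht : 1 / 2 ≤ t) (hr0 : 0 ≤ r) (hr1 : r ≤ 1) :
    |t ^ r - 1| ≤ r * 2 ^ (1 - r) * |t - 1| := by
  have ht0 : 0 < t := by linarith
  have htwo : 1 ≤ (2 : ℝ) ^ (1 - r) := one_le_rpow one_le_two (by linarith)
  rcases le_or_gt 1 t with h1 | h1
  · have hchord : t ^ r ≤ 1 + r * (t - 1) := by
      simpa using rpow_one_add_le_one_add_mul_self (by linarith : -1 ≤ t - 1) hr0 hr1
    rw [abs_of_nonneg (sub_nonneg.2 (one_le_rpow h1 hr0)), abs_of_nonneg (sub_nonneg.2 h1)]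
    calc t ^ r - 1 ≤ r * (t - 1) := by linarith
      _ ≤ r * (t - 1) * 2 ^ (1 - r) := le_mul_of_one_le_right (mul_nonneg hr0 (by linarith)) htwo
      _ = r * 2 ^ (1 - r) * (t - 1) := by ring
  · have htr : t ^ r ≤ 1 := rpow_le_one ht0.le h1.le hr0
    rw [abs_of_nonpos (sub_nonpos.2 htr), abs_of_neg (sub_neg.2 h1), neg_sub, neg_sub]
    calc 1 - t ^ r ≤ r * (1 - t) * t ^ (r - 1) := one_sub_rpow_le_mul_rpow_sub_one ht0 hr0 hr1
      _ ≤ r * (1 - t) * 2 ^ (1 - r) := by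
        have : 0 ≤ r * (1 - t) := mul_nonneg hr0 (by linarith)
        gcongr
        exact rpow_sub_one_le_two_rpow_one_sub ht hr1
      _ = r * 2 ^ (1 - r) * (1 - t) := by ring

end Real

/-- For every real `r` with `0 ≤ r ≤ 1` and every complex `z` with `|z| ≤ 1/2`,
`| |z+1|^r - 1 | ≤ r (1 + 2^(1-r)) |z|`. -/
theorem stmt_5 (r : ℝ) (hr0 : 0 ≤ r) (hr1 : r ≤ 1) (z : ℂ) (hz : ‖z‖ ≤ 1 / 2) :
    |‖z + 1‖ ^ r - 1| ≤ r * (1 + (2 : ℝ) ^ (1 - r)) * ‖z‖ := by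
  have hdist : |‖z + 1‖ - 1| ≤ ‖z‖ := by
    simpa using abs_norm_sub_norm_le (z + 1) 1
  have hhalf : 1 / 2 ≤ ‖z + 1‖ := by linarith [neg_abs_le (‖z + 1‖ - 1)]
  calc |‖z + 1‖ ^ r - 1| ≤ r * 2 ^ (1 - r) * |‖z + 1‖ - 1| :=
        Real.abs_rpow_sub_one_le_of_one_half_le hhalf hr0 hr1
    _ ≤ r * (1 + 2 ^ (1 - r)) * ‖z‖ := by
        gcongr
        linarith
end

section
/- Let a ∈ ℂ, let α ≥ 0 with α ≠ 2, let σ ∈ {1, -1}, and define u : (0,∞) × ℝ → ℂ by u(t,x) = a · exp(i x²/(4t)) / (it)^(1/2) · exp( i σ |a|^α t^(1-α/2) / (1-α/2) ), where (it)^(1/2) = √t · e^(iπ/4). Then for every t > 0 and every x ∈ ℝ, u satisfies pointwise the nonlinear Schrödinger equation i ∂_t u(t,x) + ∂_x² u(t,x) + σ |u(t,x)|^α u(t,x) = 0. -/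
/-!
Write `u = c K e^{iθ(t)}` with `c = a e^{-iπ/4}`, `K(t,x) = e^{ix²/(4t)}/√t` and
`θ(t) = σ|a|^α t^{1-α/2}/(1-α/2)`. The profile `K` solves the free equation
`i ∂_t K + ∂_x² K = 0`, and a phase depending on `t` alone adds `-θ' u` to the linear part.
Since `|u| = |a|/√t`, one has `θ' = σ|a|^α t^{-α/2} = σ|u|^α`, which is exactly the nonlinear term.
-/

open Complex

noncomputable def schrodingerProfile (c : ℂ) (t x : ℝ) : ℂ :=
  c * exp (I * (x : ℂ) ^ 2 / (4 * (t : ℂ))) / (Real.sqrt t : ℂ)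

section SchrodingerProfile

variable (c : ℂ) (x : ℝ)

theorem hasDerivAt_schrodingerProfile_space (t : ℝ) :
    HasDerivAt (schrodingerProfile c t) (I * x / (2 * t) * schrodingerProfile c t x) x := by
  have hphase : HasDerivAt (fun y : ℝ => I * (y : ℂ) ^ 2 / (4 * (t : ℂ)))
      (I * (2 * x) / (4 * t)) x := by
    simpa using (((hasDerivAt_id (x : ℂ)).pow 2).comp_ofReal.const_mul I).div_const (4 * (t : ℂ))
  exact ((hphase.cexp.const_mul c).div_const (Real.sqrt t : ℂ)).congr_deriv
    (by unfold schrodingerProfile; ring)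

theorem iteratedDeriv_two_schrodingerProfile_space (t : ℝ) :
    iteratedDeriv 2 (schrodingerProfile c t) x =
      (I / (2 * t) - x ^ 2 / (4 * t ^ 2)) * schrodingerProfile c t x := by
  have hderiv : deriv (schrodingerProfile c t) =
      fun y : ℝ => I * y / (2 * t) * schrodingerProfile c t y :=
    funext fun y => (hasDerivAt_schrodingerProfile_space c y t).deriv
  have hlin : HasDerivAt (fun y : ℝ => I * (y : ℂ) / (2 * t)) (I / (2 * t)) x := by
    simpa using ((hasDerivAt_id (x : ℂ)).comp_ofReal.const_mul I).div_const (2 * (t : ℂ))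
  rw [iteratedDeriv_succ, iteratedDeriv_one, hderiv]
  refine (hlin.mul (hasDerivAt_schrodingerProfile_space c x t)).deriv.trans ?_
  linear_combination (x ^ 2 / (4 * t ^ 2) * schrodingerProfile c t x) * I_sq

theorem hasDerivAt_schrodingerProfile_time {t : ℝ} (ht : 0 < t) :
    HasDerivAt (fun τ : ℝ => schrodingerProfile c τ x)
      (-(1 / (2 * t) + I * x ^ 2 / (4 * t ^ 2)) * schrodingerProfile c t x) t := by
  have htC : (t : ℂ) ≠ 0 := by exact_mod_cast ht.ne'
  have hsqrt : (Real.sqrt t : ℂ) ≠ 0 := by exact_mod_cast (Real.sqrt_pos.2 ht).ne'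
  have hsq : (Real.sqrt t : ℂ) ^ 2 = t := by exact_mod_cast Real.sq_sqrt ht.le
  have hphase : HasDerivAt (fun τ : ℝ => I * (x : ℂ) ^ 2 / (4 * (τ : ℂ)))
      (-(I * x ^ 2) / (4 * t ^ 2)) t := by
    refine ((hasDerivAt_const t (I * (x : ℂ) ^ 2)).div
      ((hasDerivAt_id t).ofReal_comp.const_mul 4) (by simpa using htC)).congr_deriv ?_
    simp only [id, ofReal_one]
    field_simp
    ring
  refine ((hphase.cexp.const_mul c).div (Real.hasDerivAt_sqrt ht.ne').ofReal_comp
    hsqrt).congr_deriv ?_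
  unfold schrodingerProfile
  push_cast
  field_simp
  rw [hsq]
  ring

theorem schrodingerProfile_solves_free {t : ℝ} (ht : 0 < t) :
    I * deriv (fun τ : ℝ => schrodingerProfile c τ x) t +
      iteratedDeriv 2 (schrodingerProfile c t) x = 0 := by
  rw [(hasDerivAt_schrodingerProfile_time c x ht).deriv,
    iteratedDeriv_two_schrodingerProfile_space]
  linear_combination -(x ^ 2 / (4 * t ^ 2) * schrodingerProfile c t x) * I_sq

theorem norm_schrodingerProfile (t : ℝ) : ‖schrodingerProfile c t x‖ = ‖c‖ / Real.sqrt t := by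
  rw [schrodingerProfile, norm_div, norm_mul, Complex.norm_of_nonneg (Real.sqrt_nonneg t),
    show I * (x : ℂ) ^ 2 / (4 * t) = ((x ^ 2 / (4 * t) : ℝ) : ℂ) * I by push_cast; ring,
    norm_exp_ofReal_mul_I, mul_one]

end SchrodingerProfile

theorem schrodinger_mul_cexp_phase {v : ℝ → ℝ → ℂ} {θ : ℝ → ℂ} {θ' : ℂ} {t x : ℝ}
    (hv : DifferentiableAt ℝ (fun τ => v τ x) t) (hθ : HasDerivAt θ θ' t) :
    I * deriv (fun τ => v τ x * exp (I * θ τ)) t +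
        iteratedDeriv 2 (fun y => v t y * exp (I * θ t)) x =
      (I * deriv (fun τ => v τ x) t + iteratedDeriv 2 (fun y => v t y) x) * exp (I * θ t) -
        θ' * (v t x * exp (I * θ t)) := by
  have hderiv : deriv (fun τ => v τ x * exp (I * θ τ)) t =
      deriv (fun τ => v τ x) t * exp (I * θ t) + v t x * (exp (I * θ t) * (I * θ')) :=
    (hv.hasDerivAt.mul (hθ.const_mul I).cexp).deriv
  rw [hderiv, iteratedDeriv_mul_const_field]
  linear_combination (θ' * v t x * exp (I * θ t)) * I_sq

theorem hasDerivAt_mul_rpow_div_self (k : ℝ) {p t : ℝ} (hp : p ≠ 0) (ht : 0 < t) :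
    HasDerivAt (fun τ => k * τ ^ p / p) (k * t ^ (p - 1)) t :=
  (((Real.hasDerivAt_rpow_const (Or.inl ht.ne')).const_mul k).div_const p).congr_deriv
    (by field_simp)

theorem div_sqrt_rpow {r t : ℝ} (hr : 0 ≤ r) (ht : 0 ≤ t) (α : ℝ) :
    (r / Real.sqrt t) ^ α = r ^ α * t ^ (-(α / 2)) := by
  rw [Real.div_rpow hr (Real.sqrt_nonneg t), Real.sqrt_eq_rpow, ← Real.rpow_mul ht,
    Real.rpow_neg ht, div_eq_mul_inv, one_div_mul_eq_div]

theorem stmt_8_general (a : ℂ) (α : ℝ) (hα2 : α ≠ 2) (σ : ℝ)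
    (u : ℝ → ℝ → ℂ)
    (hu : ∀ t x : ℝ, u t x =
      a * Complex.exp (Complex.I * (x : ℂ) ^ 2 / (4 * (t : ℂ))) /
        ((Real.sqrt t : ℂ) * Complex.exp (Complex.I * (Real.pi : ℂ) / 4)) *
        Complex.exp (Complex.I * (σ : ℂ) *
          ((‖a‖ ^ α * t ^ (1 - α / 2) / (1 - α / 2) : ℝ) : ℂ))) :
    ∀ t : ℝ, 0 < t → ∀ x : ℝ,
      Complex.I * deriv (fun τ : ℝ => u τ x) t + iteratedDeriv 2 (fun y : ℝ => u t y) x +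
        (σ : ℂ) * ((‖u t x‖ ^ α : ℝ) : ℂ) * u t x = 0 := by
  intro t ht x
  have hp : 1 - α / 2 ≠ 0 := fun h => hα2 (by linarith)
  set c := a / exp (I * Real.pi / 4)
  set θ : ℝ → ℂ := fun τ => ((σ * ‖a‖ ^ α * τ ^ (1 - α / 2) / (1 - α / 2) : ℝ) : ℂ)
  have hu' : u = fun τ y => schrodingerProfile c τ y * exp (I * θ τ) := by
    funext τ y
    rw [hu, schrodingerProfile]
    simp only [c, θ]
    push_cast
    ring_nf
  have hθ : HasDerivAt θ (σ * ‖a‖ ^ α * t ^ (1 - α / 2 - 1) : ℝ) t :=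
    (hasDerivAt_mul_rpow_div_self _ hp ht).ofReal_comp
  have hc : ‖c‖ = ‖a‖ := by
    rw [norm_div, show I * Real.pi / 4 = I * ((Real.pi / 4 : ℝ) : ℂ) by push_cast; ring,
      norm_exp_I_mul_ofReal, div_one]
  have hnorm : ‖u t x‖ ^ α = ‖a‖ ^ α * t ^ (1 - α / 2 - 1) := by
    rw [hu', norm_mul, norm_schrodingerProfile, norm_exp_I_mul_ofReal, mul_one, hc,
      div_sqrt_rpow (norm_nonneg a) ht.le]
    ring_nf
  rw [hnorm, hu', schrodinger_mul_cexp_phase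
    (hasDerivAt_schrodingerProfile_time c x ht).differentiableAt hθ,
    schrodingerProfile_solves_free c x ht]
  push_cast
  ring

/-- The self-similar function
`u(t,x) = a e^{i x²/(4t)} / (it)^{1/2} · e^{i σ |a|^α t^{1-α/2}/(1-α/2)}`, with
`(it)^{1/2} = √t e^{iπ/4}`, satisfies pointwise the NLS
`i ∂_t u + ∂_x² u + σ |u|^α u = 0` for `t > 0`, when `α ≥ 0`, `α ≠ 2`, `σ = ±1`. -/
theorem stmt_8 (a : ℂ) (α : ℝ) (hα : 0 ≤ α) (hα2 : α ≠ 2) (σ : ℝ) (hσ : σ = 1 ∨ σ = -1)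
    (u : ℝ → ℝ → ℂ)
    (hu : ∀ t x : ℝ, u t x =
      a * Complex.exp (Complex.I * (x : ℂ) ^ 2 / (4 * (t : ℂ))) /
        ((Real.sqrt t : ℂ) * Complex.exp (Complex.I * (Real.pi : ℂ) / 4)) *
        Complex.exp (Complex.I * (σ : ℂ) *
          ((‖a‖ ^ α * t ^ (1 - α / 2) / (1 - α / 2) : ℝ) : ℂ))) :
    ∀ t : ℝ, 0 < t → ∀ x : ℝ,
      Complex.I * deriv (fun τ : ℝ => u τ x) t + iteratedDeriv 2 (fun y : ℝ => u t y) x +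
        (σ : ℂ) * ((‖u t x‖ ^ α : ℝ) : ℂ) * u t x = 0 :=
  stmt_8_general a α hα2 σ u hu
end

section
/- Let a ∈ ℂ and σ ∈ {1, -1}, and define u : (0,∞) × ℝ → ℂ by u(t,x) = a · exp(i x²/(4t)) / (it)^(1/2) · exp( i σ |a|² log t ), where (it)^(1/2) = √t · e^(iπ/4). Then for every t > 0 and every x ∈ ℝ, u satisfies pointwise the cubic nonlinear Schrödinger equation i ∂_t u(t,x) + ∂_x² u(t,x) + σ |u(t,x)|² u(t,x) = 0. -/
/-!
`u` is the free Schrödinger solution `a (it)^{-1/2} e^{ix²/(4t)}` multiplied by the purely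
time-dependent phase `e^{iθ(t)}`, `θ(t) = σ |a|² log t`. Such a phase commutes with `∂_x²` and
contributes `-θ'(t) u` to `i ∂_t u`, while the modulus is unchanged: `|u|² = |a|²/t`. Since
`θ'(t) = σ |a|²/t = σ |u|²`, this term cancels the cubic nonlinearity exactly.
-/

open Complex

noncomputable def freeSchrodingerSol (c : ℂ) (t x : ℝ) : ℂ :=
  c * (((Real.sqrt t : ℝ) : ℂ)⁻¹ * exp (I * (x : ℂ) ^ 2 / (4 * (t : ℂ))))

namespace freeSchrodingerSol

variable (c : ℂ) {t : ℝ} (x : ℝ)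

theorem hasDerivAt_time (ht : 0 < t) :
    HasDerivAt (fun τ => freeSchrodingerSol c τ x)
      (-freeSchrodingerSol c t x * (1 / (2 * t) + I * x ^ 2 / (4 * t ^ 2))) t := by
  have hs : ((Real.sqrt t : ℝ) : ℂ) ≠ 0 := by exact_mod_cast (Real.sqrt_pos.mpr ht).ne'
  have hst : ((Real.sqrt t : ℝ) : ℂ) ^ 2 = t := by exact_mod_cast Real.sq_sqrt ht.le
  have hinvSqrt := ((Real.hasDerivAt_sqrt ht.ne').ofReal_comp).fun_inv hs
  have hphase : HasDerivAt (fun τ : ℝ => I * (x : ℂ) ^ 2 / (4 * (τ : ℂ)))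
      (-(I * x ^ 2 / (4 * t ^ 2))) t := by
    have h4t : 4 * (t : ℂ) ≠ 0 := by simpa using ht.ne'
    refine ((((hasDerivAt_id t).ofReal_comp.const_mul (4 : ℂ)).fun_inv h4t).const_mul
      (I * (x : ℂ) ^ 2)).congr_deriv ?_ |>.congr_of_eventuallyEq ?_
    · simp only [id, ofReal_one]; field_simp
    · exact .of_forall fun τ => by simp [div_eq_mul_inv]
  refine ((hinvSqrt.fun_mul hphase.cexp).const_mul c).congr_deriv ?_
  simp only [freeSchrodingerSol]
  rw [← hst]
  push_cast
  field_simp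
  ring

theorem hasDerivAt_space (t y : ℝ) :
    HasDerivAt (fun y => freeSchrodingerSol c t y)
      (freeSchrodingerSol c t y * (I * y / (2 * t))) y := by
  have hphase : HasDerivAt (fun y : ℝ => I * (y : ℂ) ^ 2 / (4 * (t : ℂ)))
      (I * y / (2 * t)) y :=
    ((((hasDerivAt_id y).ofReal_comp.pow 2).const_mul I).div_const (4 * (t : ℂ))).congr_deriv
      (by simp only [id]; push_cast; ring)
  refine ((hphase.cexp.const_mul _).const_mul c).congr_deriv ?_
  simp only [freeSchrodingerSol]; ring

theorem iteratedDeriv_two_space (t : ℝ) :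
    iteratedDeriv 2 (fun y => freeSchrodingerSol c t y) x =
      freeSchrodingerSol c t x * ((I * x / (2 * t)) ^ 2 + I / (2 * t)) := by
  have hlin : HasDerivAt (fun y : ℝ => I * (y : ℂ) / (2 * t)) (I / (2 * t)) x := by
    simpa using ((hasDerivAt_id x).ofReal_comp.const_mul I).div_const (2 * (t : ℂ))
  rw [iteratedDeriv_succ, iteratedDeriv_one,
    funext fun y => (hasDerivAt_space c t y).deriv]
  refine (((hasDerivAt_space c t x).mul hlin).congr_deriv ?_).deriv
  ring

theorem schrodinger_eq_zero (ht : 0 < t) :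
    I * deriv (fun τ => freeSchrodingerSol c τ x) t +
      iteratedDeriv 2 (fun y => freeSchrodingerSol c t y) x = 0 := by
  have ht' : (t : ℂ) ≠ 0 := by exact_mod_cast ht.ne'
  rw [(hasDerivAt_time c x ht).deriv, iteratedDeriv_two_space]
  field_simp
  ring

theorem norm_sq (ht : 0 ≤ t) : ‖freeSchrodingerSol c t x‖ ^ 2 = ‖c‖ ^ 2 / t := by
  have hphase : I * (x : ℂ) ^ 2 / (4 * (t : ℂ)) = ((x ^ 2 / (4 * t) : ℝ) : ℂ) * I := by
    push_cast; ring
  rw [freeSchrodingerSol, hphase, norm_mul, norm_mul, norm_exp_ofReal_mul_I, norm_inv,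
    norm_real, Real.norm_of_nonneg (Real.sqrt_nonneg t), mul_one, mul_pow, inv_pow,
    Real.sq_sqrt ht, div_eq_mul_inv]

end freeSchrodingerSol

theorem cubicNLS_of_freeSchrodinger_mul_phase {v : ℝ → ℝ → ℂ} {θ : ℝ → ℝ} {σ t x : ℝ}
    (hv : DifferentiableAt ℝ (fun τ => v τ x) t)
    (hfree : I * deriv (fun τ => v τ x) t + iteratedDeriv 2 (fun y => v t y) x = 0)
    (hθ : HasDerivAt θ (σ * ‖v t x‖ ^ 2) t) :
    I * deriv (fun τ => v τ x * exp (θ τ * I)) t +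
        iteratedDeriv 2 (fun y => v t y * exp (θ t * I)) x +
      σ * ((‖v t x * exp (θ t * I)‖ ^ 2 : ℝ) : ℂ) * (v t x * exp (θ t * I)) = 0 := by
  have hphase := (hθ.ofReal_comp.mul_const I).cexp
  rw [(hv.hasDerivAt.fun_mul hphase).deriv, iteratedDeriv_mul_const_field, norm_mul,
    norm_exp_ofReal_mul_I, mul_one]
  push_cast
  linear_combination exp (θ t * I) * hfree + (σ * ‖v t x‖ ^ 2 * v t x * exp (θ t * I)) * I_sq

theorem stmt_9_general (a : ℂ) (σ : ℝ) (u : ℝ → ℝ → ℂ)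
    (hu : ∀ t x : ℝ, u t x =
      a * Complex.exp (Complex.I * (x : ℂ) ^ 2 / (4 * (t : ℂ))) /
        ((Real.sqrt t : ℂ) * Complex.exp (Complex.I * (Real.pi : ℂ) / 4)) *
        Complex.exp (Complex.I * (σ : ℂ) * ((‖a‖ ^ 2 * Real.log t : ℝ) : ℂ))) :
    ∀ t : ℝ, 0 < t → ∀ x : ℝ,
      Complex.I * deriv (fun τ : ℝ => u τ x) t + iteratedDeriv 2 (fun y : ℝ => u t y) x +
        (σ : ℂ) * ((‖u t x‖ ^ 2 : ℝ) : ℂ) * u t x = 0 := by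
  intro t ht x
  set c := a * (exp ((Real.pi / 4 : ℝ) * I))⁻¹ with hc_def
  have hc : ‖c‖ = ‖a‖ := by
    rw [hc_def, norm_mul, norm_inv, norm_exp_ofReal_mul_I, inv_one, mul_one]
  have hu_eq : u = fun τ y =>
      freeSchrodingerSol c τ y * exp ((σ * ‖a‖ ^ 2 * Real.log τ : ℝ) * I) := by
    ext τ y
    rw [hu, freeSchrodingerSol, hc_def]
    push_cast
    ring_nf
  have hθ : HasDerivAt (fun τ => σ * ‖a‖ ^ 2 * Real.log τ)
      (σ * ‖freeSchrodingerSol c t x‖ ^ 2) t := by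
    rw [freeSchrodingerSol.norm_sq c x ht.le, hc, mul_div_assoc', div_eq_mul_inv]
    exact (Real.hasDerivAt_log ht.ne').const_mul _
  subst hu_eq
  exact cubicNLS_of_freeSchrodinger_mul_phase
    (freeSchrodingerSol.hasDerivAt_time c x ht).differentiableAt
    (freeSchrodingerSol.schrodinger_eq_zero c x ht) hθ

/-- The function `u(t,x) = a e^{i x²/(4t)} / (it)^{1/2} · e^{i σ |a|² log t}`, with
`(it)^{1/2} = √t e^{iπ/4}`, satisfies pointwise the cubic NLS
`i ∂_t u + ∂_x² u + σ |u|² u = 0` for `t > 0`, when `σ = ±1`. -/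
theorem stmt_9 (a : ℂ) (σ : ℝ) (hσ : σ = 1 ∨ σ = -1) (u : ℝ → ℝ → ℂ)
    (hu : ∀ t x : ℝ, u t x =
      a * Complex.exp (Complex.I * (x : ℂ) ^ 2 / (4 * (t : ℂ))) /
        ((Real.sqrt t : ℂ) * Complex.exp (Complex.I * (Real.pi : ℂ) / 4)) *
        Complex.exp (Complex.I * (σ : ℂ) * ((‖a‖ ^ 2 * Real.log t : ℝ) : ℂ))) :
    ∀ t : ℝ, 0 < t → ∀ x : ℝ,
      Complex.I * deriv (fun τ : ℝ => u τ x) t + iteratedDeriv 2 (fun y : ℝ => u t y) x +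
        (σ : ℂ) * ((‖u t x‖ ^ 2 : ℝ) : ℂ) * u t x = 0 :=
  stmt_9_general a σ u hu
end

section
/- Let d ≥ 1, a ∈ ℂ, σ ∈ {1,-1}, and define u : (0,∞) × ℝ^d → ℂ by u(t,x) = a · exp(i‖x‖²/(4t)) / (it)^(d/2) · exp( i σ |a|^(2/d) log t ), where (it)^(d/2) is the principal complex power. Then for every t > 0 and x ∈ ℝ^d, i ∂_t u(t,x) + Σ_{j=1}^d ∂²_{x_j} u(t,x) + σ |u(t,x)|^(2/d) u(t,x) = 0. -/
/-!
Write `u = a · K · exp (i σ A log t)` with `A = |a|^(2/d)`, where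
`K t x = exp (i ‖x‖² / (4t)) / (i t)^(d/2)` is the fundamental solution of the free Schrödinger
equation, `i ∂ₜ K + Δ K = 0`. Since `|K t x| = t^(-d/2)`, in the critical case the nonlinearity
`|u|^(2/d) = A / t` does not depend on `x`, and the time derivative of the phase factor
contributes `i · (i σ A / t) u = -σ A / t · u`, which cancels it.
-/

open Complex

theorem iteratedDeriv_two_cexp_quadratic (α β γ : ℂ) (s : ℝ) :
    iteratedDeriv 2 (fun s : ℝ => cexp (α + β * s + γ * s ^ 2)) s =
      cexp (α + β * s + γ * s ^ 2) * ((β + 2 * γ * s) ^ 2 + 2 * γ) := by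
  have hq : ∀ s : ℝ, HasDerivAt (fun s : ℝ => α + β * s + γ * (s : ℂ) ^ 2) (β + 2 * γ * s) s :=
    fun s => (((((hasDerivAt_id (s : ℂ)).const_mul β).const_add α).fun_add
      ((hasDerivAt_pow 2 (s : ℂ)).const_mul γ)).congr_deriv (by simp; ring)).comp_ofReal
  have hderiv : deriv (fun s : ℝ => cexp (α + β * s + γ * s ^ 2)) =
      fun s : ℝ => cexp (α + β * s + γ * s ^ 2) * (β + 2 * γ * s) :=
    funext fun s => (hq s).cexp.deriv
  have hlin : HasDerivAt (fun s : ℝ => β + 2 * γ * (s : ℂ)) (2 * γ) s := by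
    simpa using (((hasDerivAt_id (s : ℂ)).comp_ofReal).const_mul (2 * γ)).const_add β
  rw [iteratedDeriv_succ, iteratedDeriv_one, hderiv, ((hq s).cexp.fun_mul hlin).deriv]
  ring

theorem norm_add_smul_single_sq {ι : Type*} [Fintype ι] [DecidableEq ι]
    (x : EuclideanSpace ℝ ι) (j : ι) (s : ℝ) :
    ‖x + s • EuclideanSpace.single j (1 : ℝ)‖ ^ 2 = ‖x‖ ^ 2 + 2 * x j * s + s ^ 2 := by
  rw [norm_add_sq_real, real_inner_smul_right, EuclideanSpace.inner_single_right, norm_smul,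
    PiLp.norm_single]
  simp only [Real.ringHom_apply, one_mul, mul_one, norm_one, Real.norm_eq_abs, sq_abs]
  ring

noncomputable def schrodingerKernel (d : ℕ) (t : ℝ) (x : EuclideanSpace ℝ (Fin d)) : ℂ :=
  cexp (I * ((‖x‖ ^ 2 : ℝ) : ℂ) / (4 * (t : ℂ))) / (I * (t : ℂ)) ^ ((d : ℂ) / 2)

section
variable {d : ℕ} {t : ℝ} (x : EuclideanSpace ℝ (Fin d))

theorem schrodingerKernel_add_smul_single (j : Fin d) (s : ℝ) :
    schrodingerKernel d t (x + s • EuclideanSpace.single j 1) =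
      cexp (I * ((‖x‖ ^ 2 : ℝ) : ℂ) / (4 * t) + 2 * I * x j / (4 * t) * s +
        I / (4 * t) * (s : ℂ) ^ 2) / (I * (t : ℂ)) ^ ((d : ℂ) / 2) := by
  rw [schrodingerKernel, norm_add_smul_single_sq]
  push_cast
  ring_nf

theorem sum_iteratedDeriv_two_schrodingerKernel :
    ∑ j : Fin d, iteratedDeriv 2
        (fun s : ℝ => schrodingerKernel d t (x + s • EuclideanSpace.single j 1)) 0 =
      schrodingerKernel d t x * (-((‖x‖ ^ 2 : ℝ) : ℂ) / (4 * (t : ℂ) ^ 2) + I * d / (2 * t)) := by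
  simp only [schrodingerKernel_add_smul_single, iteratedDeriv_div_const,
    iteratedDeriv_two_cexp_quadratic]
  simp only [Complex.ofReal_zero, mul_zero, add_zero, zero_pow two_ne_zero]
  rw [← Finset.sum_div, ← Finset.mul_sum, Finset.sum_add_distrib, Finset.sum_const,
    Finset.card_univ, Fintype.card_fin, EuclideanSpace.real_norm_sq_eq, schrodingerKernel,
    EuclideanSpace.real_norm_sq_eq]
  simp only [div_pow, mul_pow, I_sq, ← Finset.sum_div, ← Finset.mul_sum, nsmul_eq_mul]
  push_cast
  ring

theorem I_mul_ofReal_mem_slitPlane (ht : t ≠ 0) : I * (t : ℂ) ∈ slitPlane :=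
  mem_slitPlane_iff.mpr (Or.inr (by simpa using ht))

theorem hasDerivAt_schrodingerKernel (ht : t ≠ 0) :
    HasDerivAt (fun τ : ℝ => schrodingerKernel d τ x)
      (schrodingerKernel d t x * (-(I * ((‖x‖ ^ 2 : ℝ) : ℂ)) / (4 * (t : ℂ) ^ 2) - d / (2 * t)))
      t := by
  have htC : (t : ℂ) ≠ 0 := ofReal_ne_zero.mpr ht
  have hphase := ((hasDerivAt_id (t : ℂ)).const_mul 4).fun_inv (by simpa using htC)
    |>.const_mul (I * ((‖x‖ ^ 2 : ℝ) : ℂ)) |>.cexp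
  have hpow := ((hasDerivAt_id (t : ℂ)).const_mul I).cpow_const (c := (d : ℂ) / 2)
    (I_mul_ofReal_mem_slitPlane ht)
  have hP : (I * (t : ℂ)) ^ ((d : ℂ) / 2) ≠ 0 := by simp [cpow_eq_zero_iff, htC, I_ne_zero]
  refine (hphase.div hpow hP).comp_ofReal.congr_deriv ?_
  simp only [schrodingerKernel, id, cpow_sub _ _ (mul_ne_zero I_ne_zero htC), cpow_one]
  field_simp

theorem norm_schrodingerKernel (ht : t ≠ 0) :
    ‖schrodingerKernel d t x‖ = (|t| ^ ((d : ℝ) / 2))⁻¹ := by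
  have hIt : I * (t : ℂ) ≠ 0 := mul_ne_zero I_ne_zero (ofReal_ne_zero.mpr ht)
  have hphase : I * ((‖x‖ ^ 2 : ℝ) : ℂ) / (4 * (t : ℂ)) = ((‖x‖ ^ 2 / (4 * t) : ℝ) : ℂ) * I := by
    push_cast; ring
  have hexp : (d : ℂ) / 2 = ((d / 2 : ℝ) : ℂ) := by push_cast; ring
  rw [schrodingerKernel, norm_div, hphase, norm_exp_ofReal_mul_I, hexp, norm_cpow_of_ne_zero hIt]
  simp

theorem schrodingerKernel_free_equation (ht : t ≠ 0) :
    I * deriv (fun τ : ℝ => schrodingerKernel d τ x) t +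
      ∑ j : Fin d, iteratedDeriv 2
        (fun s : ℝ => schrodingerKernel d t (x + s • EuclideanSpace.single j 1)) 0 = 0 := by
  rw [(hasDerivAt_schrodingerKernel x ht).deriv, sum_iteratedDeriv_two_schrodingerKernel]
  linear_combination (-schrodingerKernel d t x * ((‖x‖ ^ 2 : ℝ) : ℂ) / (4 * (t : ℂ) ^ 2)) * I_sq

theorem norm_const_mul_schrodingerKernel_rpow (hd : d ≠ 0) (ht : t ≠ 0) (a : ℂ) :
    ‖a * schrodingerKernel d t x‖ ^ ((2 : ℝ) / d) = ‖a‖ ^ ((2 : ℝ) / d) / |t| := by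
  have hexp : (d : ℝ) / 2 * (2 / d) = 1 := by field_simp
  rw [norm_mul, norm_schrodingerKernel x ht, Real.mul_rpow (norm_nonneg a) (by positivity),
    Real.inv_rpow (by positivity), ← Real.rpow_mul (abs_nonneg t), hexp, Real.rpow_one,
    ← div_eq_mul_inv]

end

theorem stmt_10_general (d : ℕ) (hd : 1 ≤ d) (a : ℂ) (σ : ℝ)
    (u : ℝ → EuclideanSpace ℝ (Fin d) → ℂ)
    (hu : ∀ (t : ℝ) (x : EuclideanSpace ℝ (Fin d)), u t x =
      a * Complex.exp (Complex.I * ((‖x‖ ^ 2 : ℝ) : ℂ) / (4 * (t : ℂ))) /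
        (Complex.I * (t : ℂ)) ^ ((d : ℂ) / 2) *
        Complex.exp (Complex.I * (σ : ℂ) *
          ((‖a‖ ^ ((2 : ℝ) / d) * Real.log t : ℝ) : ℂ))) :
    ∀ t : ℝ, 0 < t → ∀ x : EuclideanSpace ℝ (Fin d),
      Complex.I * deriv (fun τ : ℝ => u τ x) t +
        ∑ j : Fin d,
          iteratedDeriv 2 (fun s : ℝ => u t (x + s • EuclideanSpace.single j (1 : ℝ))) 0 +
        (σ : ℂ) * ((‖u t x‖ ^ ((2 : ℝ) / d) : ℝ) : ℂ) * u t x = 0 := by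
  intro t ht x
  set A := ‖a‖ ^ ((2 : ℝ) / d)
  set E : ℝ → ℂ := fun τ => cexp (I * σ * ((A * Real.log τ : ℝ) : ℂ))
  have hu' : ∀ τ y, u τ y = a * schrodingerKernel d τ y * E τ := by
    intro τ y
    rw [hu, schrodingerKernel, mul_div_assoc]
  have hE : HasDerivAt E (E t * (I * σ * ((A * t⁻¹ : ℝ) : ℂ))) t :=
    (((Real.hasDerivAt_log ht.ne').const_mul A).ofReal_comp.const_mul (I * σ)).cexp
  have hK := (hasDerivAt_schrodingerKernel x ht.ne').differentiableAt.hasDerivAt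
  have hdt : deriv (fun τ => u τ x) t = a * deriv (fun τ => schrodingerKernel d τ x) t * E t +
      a * schrodingerKernel d t x * (E t * (I * σ * ((A * t⁻¹ : ℝ) : ℂ))) := by
    simp_rw [hu']
    exact ((hK.const_mul a).mul hE).deriv
  have hΔ : ∀ j : Fin d,
      iteratedDeriv 2 (fun s : ℝ => u t (x + s • EuclideanSpace.single j 1)) 0 =
        a * iteratedDeriv 2
          (fun s : ℝ => schrodingerKernel d t (x + s • EuclideanSpace.single j 1)) 0 * E t := by
    simp [hu']
  have hnorm : ‖u t x‖ ^ ((2 : ℝ) / d) = A / t := by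
    have hE1 : ‖E t‖ = 1 := by simp [E, norm_exp]
    rw [hu', norm_mul, hE1, mul_one, norm_const_mul_schrodingerKernel_rpow x (by omega) ht.ne' a,
      abs_of_pos ht]
  rw [hdt, Finset.sum_congr rfl fun j _ => hΔ j, hnorm, ← Finset.sum_mul, ← Finset.mul_sum,
    hu' t x]
  push_cast
  linear_combination (a * E t) * schrodingerKernel_free_equation x ht.ne' +
    (σ * A / t * a * schrodingerKernel d t x * E t) * I_sq

/-- The function `u(t,x) = a e^{i‖x‖²/(4t)} / (it)^{d/2} · e^{i σ |a|^{2/d} log t}`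
(principal complex power) satisfies pointwise the critical NLS
`i ∂_t u + Δ u + σ |u|^{2/d} u = 0` on `(0,∞) × ℝ^d`, when `σ = ±1`. -/
theorem stmt_10 (d : ℕ) (hd : 1 ≤ d) (a : ℂ) (σ : ℝ) (hσ : σ = 1 ∨ σ = -1)
    (u : ℝ → EuclideanSpace ℝ (Fin d) → ℂ)
    (hu : ∀ (t : ℝ) (x : EuclideanSpace ℝ (Fin d)), u t x =
      a * Complex.exp (Complex.I * ((‖x‖ ^ 2 : ℝ) : ℂ) / (4 * (t : ℂ))) /
        (Complex.I * (t : ℂ)) ^ ((d : ℂ) / 2) *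
        Complex.exp (Complex.I * (σ : ℂ) *
          ((‖a‖ ^ ((2 : ℝ) / d) * Real.log t : ℝ) : ℂ))) :
    ∀ t : ℝ, 0 < t → ∀ x : EuclideanSpace ℝ (Fin d),
      Complex.I * deriv (fun τ : ℝ => u τ x) t +
        ∑ j : Fin d,
          iteratedDeriv 2 (fun s : ℝ => u t (x + s • EuclideanSpace.single j (1 : ℝ))) 0 +
        (σ : ℂ) * ((‖u t x‖ ^ ((2 : ℝ) / d) : ℝ) : ℂ) * u t x = 0 :=
  stmt_10_general d hd a σ u hu
end
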